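/- arXiv:2508.06426 — 2 statements merged into one kernel-verified Lean document; each statement's English description precedes it below -/
import Mathlib

section
/- Under the assumptions of the disjoint-support uniform mixture of two independent components (as in Proposition 1 of the paper), the normalized mutual information $\overline{I}(u,v) = \frac{2 I(u,v)}{H(u) + H(v)}$ satisfies $\overline{I}(u,v) = \frac{4}{C_{\mathrm{diversity}} + 4}$, where $C_{\mathrm{diversity}} = H(u_1) + H(u_2) + H(v_1) + H(v_2)$. -/
open Finset Real

noncomputable def entropy2 {α : Type*} [Fintype α] (p : α → ℝ) : ℝ :=
  -∑ x, p x * Real.logb 2 (p x)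

noncomputable def mutualInfo2 {α β : Type*} [Fintype α] [Fintype β] (p : α → β → ℝ) : ℝ :=
  ∑ u, ∑ v, p u v * Real.logb 2 (p u v / ((∑ v', p u v') * (∑ u', p u' v)))

lemma half_logb_half (t : ℝ) :
    t / 2 * Real.logb 2 (t / 2) = t * Real.logb 2 t / 2 - t / 2 := by
  rcases eq_or_ne t 0 with ht | ht
  · simp [ht]
  · rw [Real.logb_div ht two_ne_zero, Real.logb_self_eq_one (b := 2) (by norm_num)]
    ring

lemma entropy_mix {α : Type*} [Fintype α] (p q : α → ℝ)
    (sp : ∑ x, p x = 1) (sq : ∑ x, q x = 1)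
    (hd : ∀ x, p x = 0 ∨ q x = 0) :
    entropy2 (fun x => (p x + q x) / 2) = (entropy2 p + entropy2 q) / 2 + 1 := by
  unfold entropy2
  have key : ∀ x, (p x + q x) / 2 * Real.logb 2 ((p x + q x) / 2)
      = (p x * Real.logb 2 (p x) + q x * Real.logb 2 (q x)) / 2 - (p x + q x) / 2 := by
    intro x
    rcases hd x with h | h <;>
      simp only [h, zero_add, add_zero, zero_mul, mul_zero] <;>
      rw [half_logb_half] <;> ring
  simp only [key, Finset.sum_sub_distrib]
  have h1 : ∑ x, (p x + q x) / 2 = 1 := by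
    rw [← Finset.sum_div, Finset.sum_add_distrib, sp, sq]; norm_num
  rw [h1, ← Finset.sum_div, Finset.sum_add_distrib]
  ring

lemma mix_term (a b : ℝ) :
    a * b / 2 * Real.logb 2 (a * b / 2 / (a / 2 * (b / 2))) = a * b / 2 := by
  rcases eq_or_ne a 0 with ha | ha
  · simp [ha]
  rcases eq_or_ne b 0 with hb | hb
  · simp [hb]
  have h : a * b / 2 / (a / 2 * (b / 2)) = 2 := by
    field_simp
  rw [h]
  have h2 : Real.logb 2 2 = 1 := Real.logb_self_eq_one (b := 2) (by norm_num)
  rw [h2]; ring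

theorem normalized_MI_disjoint {α β : Type*} [Fintype α] [Fintype β]
    (pu1 pu2 : α → ℝ) (pv1 pv2 : β → ℝ)
    (hu1 : ∀ x, 0 ≤ pu1 x) (hu2 : ∀ x, 0 ≤ pu2 x)
    (hv1 : ∀ x, 0 ≤ pv1 x) (hv2 : ∀ x, 0 ≤ pv2 x)
    (su1 : ∑ x, pu1 x = 1) (su2 : ∑ x, pu2 x = 1)
    (sv1 : ∑ x, pv1 x = 1) (sv2 : ∑ x, pv2 x = 1)
    (hdisjU : ∀ x, pu1 x = 0 ∨ pu2 x = 0)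
    (hdisjV : ∀ x, pv1 x = 0 ∨ pv2 x = 0) :
    2 * mutualInfo2 (fun u v => (pu1 u * pv1 v + pu2 u * pv2 v) / 2) /
      (entropy2 (fun u => (pu1 u + pu2 u) / 2) + entropy2 (fun v => (pv1 v + pv2 v) / 2))
    = 4 / ((entropy2 pu1 + entropy2 pu2 + entropy2 pv1 + entropy2 pv2) + 4) := by
  have margU : ∀ u, ∑ v, (pu1 u * pv1 v + pu2 u * pv2 v) / 2 = (pu1 u + pu2 u) / 2 := by
    intro u
    rw [← Finset.sum_div, Finset.sum_add_distrib, ← Finset.mul_sum, ← Finset.mul_sum,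
      sv1, sv2, mul_one, mul_one]
  have margV : ∀ v, ∑ u, (pu1 u * pv1 v + pu2 u * pv2 v) / 2 = (pv1 v + pv2 v) / 2 := by
    intro v
    rw [← Finset.sum_div, Finset.sum_add_distrib, ← Finset.sum_mul, ← Finset.sum_mul,
      su1, su2, one_mul, one_mul]
  have hMI : mutualInfo2 (fun u v => (pu1 u * pv1 v + pu2 u * pv2 v) / 2) = 1 := by
    unfold mutualInfo2
    have hterm : ∀ u v, (pu1 u * pv1 v + pu2 u * pv2 v) / 2 *
        Real.logb 2 ((pu1 u * pv1 v + pu2 u * pv2 v) / 2 /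
          ((∑ v', (pu1 u * pv1 v' + pu2 u * pv2 v') / 2) *
           (∑ u', (pu1 u' * pv1 v + pu2 u' * pv2 v) / 2)))
        = (pu1 u * pv1 v + pu2 u * pv2 v) / 2 := by
      intro u v
      rw [margU u, margV v]
      rcases hdisjU u with h1 | h1 <;> rcases hdisjV v with h2 | h2 <;>
        simp only [h1, h2, zero_mul, mul_zero, zero_add, add_zero, zero_div] <;>
        first
          | simp
          | exact mix_term _ _
    calc ∑ u, ∑ v, (pu1 u * pv1 v + pu2 u * pv2 v) / 2 *
          Real.logb 2 ((pu1 u * pv1 v + pu2 u * pv2 v) / 2 /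
            ((∑ v', (pu1 u * pv1 v' + pu2 u * pv2 v') / 2) *
             (∑ u', (pu1 u' * pv1 v + pu2 u' * pv2 v) / 2)))
        = ∑ u, ∑ v, (pu1 u * pv1 v + pu2 u * pv2 v) / 2 := by
          exact Finset.sum_congr rfl fun u _ => Finset.sum_congr rfl fun v _ => hterm u v
      _ = ∑ u, (pu1 u + pu2 u) / 2 := Finset.sum_congr rfl fun u _ => margU u
      _ = 1 := by
          rw [← Finset.sum_div, Finset.sum_add_distrib, su1, su2]; norm_num
  rw [hMI, entropy_mix pu1 pu2 su1 su2 hdisjU, entropy_mix pv1 pv2 sv1 sv2 hdisjV]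
  have h : (entropy2 pu1 + entropy2 pu2) / 2 + 1 + ((entropy2 pv1 + entropy2 pv2) / 2 + 1)
      = (entropy2 pu1 + entropy2 pu2 + entropy2 pv1 + entropy2 pv2 + 4) / 2 := by ring
  rw [h, div_div_eq_mul_div]
  norm_num
end

section
/- Let $u_1, u_2$ be discrete random variables with pmfs $p_{u_1}, p_{u_2}$ and supports $U_1, U_2$, possibly overlapping, with $U_{12} = U_1 \cap U_2$. Let $u$ have the uniform mixture pmf $p_u = \frac{1}{2}(p_{u_1} + p_{u_2})$. Then $H(u) \geq \frac{1}{2}\left[ H(u_1) + H(u_2) + 2 - \sum_{u \in U_{12}} p_{u_1}(u) - \sum_{u \in U_{12}} p_{u_2}(u) \right]$, with entropy in base 2. -/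
open Finset Real
open scoped Classical

lemma logb_half (b : ℝ) (hb : b ≠ 0) : Real.logb 2 (b / 2) = Real.logb 2 b - 1 := by
  rw [Real.logb_div hb two_ne_zero, Real.logb_self_eq_one] ; norm_num

lemma key_pointwise (a b : ℝ) (ha : 0 ≤ a) (hb : 0 ≤ b) :
    (-(a * Real.logb 2 a) - b * Real.logb 2 b + a + b
      - (if a ≠ 0 ∧ b ≠ 0 then a else 0) - (if a ≠ 0 ∧ b ≠ 0 then b else 0)) / 2
      ≤ -((a + b) / 2 * Real.logb 2 ((a + b) / 2)) := by
  rcases eq_or_lt_of_le ha with ha0 | ha0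
  · rcases eq_or_lt_of_le hb with hb0 | hb0
    · simp [← ha0, ← hb0]
    · have hb' : b ≠ 0 := ne_of_gt hb0
      simp only [← ha0, ne_eq, not_true_eq_false, false_and, if_false, zero_add]
      rw [logb_half b hb']
      ring_nf
      simp [Real.logb]
  · rcases eq_or_lt_of_le hb with hb0 | hb0
    · have ha' : a ≠ 0 := ne_of_gt ha0
      simp only [← hb0, ne_eq, not_true_eq_false, and_false, if_false, add_zero]
      rw [logb_half a ha']
      ring_nf
      simp [Real.logb]
    · have ha' : a ≠ 0 := ne_of_gt ha0
      have hb' : b ≠ 0 := ne_of_gt hb0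
      rw [if_pos ⟨ha', hb'⟩, if_pos ⟨ha', hb'⟩]
      have hc := Real.convexOn_mul_log.2 (Set.mem_Ici.mpr ha) (Set.mem_Ici.mpr hb)
        (by norm_num : (0:ℝ) ≤ 1/2) (by norm_num : (0:ℝ) ≤ 1/2) (by norm_num)
      simp only [smul_eq_mul] at hc
      have hm : (1/2 : ℝ) * a + (1/2) * b = (a + b) / 2 := by ring
      rw [hm] at hc
      have hlog : (0:ℝ) < Real.log 2 := Real.log_pos (by norm_num)
      simp only [Real.logb]
      have hne : Real.log 2 ≠ 0 := ne_of_gt hlog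
      have e1 : (-(a * (Real.log a / Real.log 2)) - b * (Real.log b / Real.log 2)
          + a + b - a - b) / 2 = (-(a * Real.log a) - b * Real.log b) / (2 * Real.log 2) := by
        field_simp; ring
      have e2 : -((a + b) / 2 * (Real.log ((a + b) / 2) / Real.log 2))
          = -((a + b) * Real.log ((a + b) / 2)) / (2 * Real.log 2) := by
        field_simp
      rw [e1, e2]
      gcongr (?_) / (2 * Real.log 2)
      linarith

theorem mixture_entropy_overlap_lower_bound {α : Type*} [Fintype α] (p1 p2 : α → ℝ)
    (h1 : ∀ x, 0 ≤ p1 x) (h2 : ∀ x, 0 ≤ p2 x)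
    (s1 : ∑ x, p1 x = 1) (s2 : ∑ x, p2 x = 1) :
    entropy2 (fun x => (p1 x + p2 x) / 2) ≥
      (entropy2 p1 + entropy2 p2 + 2
        - (∑ x, if p1 x ≠ 0 ∧ p2 x ≠ 0 then p1 x else 0)
        - (∑ x, if p1 x ≠ 0 ∧ p2 x ≠ 0 then p2 x else 0)) / 2 := by
  have hsum : ∑ x, ((-(p1 x * Real.logb 2 (p1 x)) - p2 x * Real.logb 2 (p2 x) + p1 x + p2 x
      - (if p1 x ≠ 0 ∧ p2 x ≠ 0 then p1 x else 0)
      - (if p1 x ≠ 0 ∧ p2 x ≠ 0 then p2 x else 0)) / 2)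
      ≤ ∑ x, -((p1 x + p2 x) / 2 * Real.logb 2 ((p1 x + p2 x) / 2)) :=
    Finset.sum_le_sum fun x _ => key_pointwise _ _ (h1 x) (h2 x)
  simp only [← Finset.sum_div, Finset.sum_sub_distrib, Finset.sum_add_distrib,
    Finset.sum_neg_distrib, s1, s2] at hsum
  unfold entropy2
  simp only [ge_iff_le]
  linarith
end
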